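/- Let (Y, X) be a random pair with Y non-negative, 0 < E[Y] < ∞, and let mu-hat be a regression function such that mu-hat(X) is non-negative with finite mean and continuous cumulative distribution function F_{mu-hat(X)}, and such that mu-hat is auto-calibrated for Y, i.e. E[Y | mu-hat(X)] = mu-hat(X) almost surely. Then the area under the cumulative accuracy profile of the model satisfies ∫_0^1 CAP_{Y, mu-hat(X)}(alpha) d alpha − 1/2 = (1/E[Y]) E[ mu-hat(X) · F_{mu-hat(X)}(mu-hat(X)) ] − 1/2. -/

import Mathlib

/-!
Auto-calibration lets one replace `Y` by `Z = μ̂(X)` when integrating over any event determined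
by `Z`, in particular over the top-`α` event `{Z > F⁻¹(1 - α)}`. Because the CDF `F` of `Z` is
continuous, that event is almost surely `{F(Z) > 1 - α}`, the level sets of `F` being null.
Integrating in `α` and exchanging the integrals turns the area into
`E[Z · Leb{α ∈ (0,1) | α < F(Z)}] = E[Z F(Z)]`.
-/

open MeasureTheory ProbabilityTheory

/-- The cumulative distribution function of a measure on `ℝ`. -/
noncomputable def cdfOf (μ : Measure ℝ) (y : ℝ) : ℝ := (μ (Set.Iic y)).toReal

/-- The left-continuous generalized inverse of a CDF: `F⁻¹(p) = inf {t | p ≤ F t}`. -/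
noncomputable def leftContInv (F : ℝ → ℝ) (p : ℝ) : ℝ := sInf {t : ℝ | p ≤ F t}

open Filter Set Topology

namespace ProbabilityTheory

section ContinuousCDF

variable {ν : Measure ℝ}

lemma cdfOf_eq_cdf [IsProbabilityMeasure ν] : cdfOf ν = cdf ν :=
  funext fun x => (cdf_eq_real ν x).symm

lemma bddBelow_setOf_le_cdf {β : ℝ} (hβ : 0 < β) : BddBelow {t | β ≤ cdf ν t} := by
  obtain ⟨t, ht⟩ := ((tendsto_cdf_atBot ν).eventually (eventually_lt_nhds hβ)).exists
  exact ⟨t, fun s hs => ((monotone_cdf ν).reflect_lt (ht.trans_le hs)).le⟩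

lemma bddAbove_setOf_cdf_le {β : ℝ} (hβ : β < 1) : BddAbove {t | cdf ν t ≤ β} := by
  obtain ⟨t, ht⟩ := ((tendsto_cdf_atTop ν).eventually (eventually_gt_nhds hβ)).exists
  exact ⟨t, fun s hs => ((monotone_cdf ν).reflect_lt (hs.trans_lt ht)).le⟩

lemma nonempty_setOf_le_cdf {β : ℝ} (hβ : β < 1) : {t | β ≤ cdf ν t}.Nonempty := by
  obtain ⟨t, ht⟩ := ((tendsto_cdf_atTop ν).eventually (eventually_gt_nhds hβ)).exists
  exact ⟨t, ht.le⟩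

lemma le_cdf_of_leftContInv_lt {β z : ℝ} (hβ₀ : 0 < β) (hβ₁ : β < 1)
    (h : leftContInv (cdf ν) β < z) : β ≤ cdf ν z := by
  obtain ⟨t, ht, htz⟩ :=
    (csInf_lt_iff (bddBelow_setOf_le_cdf hβ₀) (nonempty_setOf_le_cdf hβ₁)).1 h
  exact ht.trans (monotone_cdf ν htz.le)

lemma leftContInv_lt_of_lt_cdf (hcont : Continuous (cdf ν)) {β z : ℝ} (hβ : 0 < β)
    (h : β < cdf ν z) : leftContInv (cdf ν) β < z := by
  obtain ⟨t, hβt, htz⟩ : ∃ t, β < cdf ν t ∧ t < z :=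
    (((hcont.tendsto z).eventually_const_lt h).filter_mono nhdsWithin_le_nhds |>.and
      (self_mem_nhdsWithin (s := Iio z))).exists
  exact (csInf_le (bddBelow_setOf_le_cdf hβ) hβt.le).trans_lt htz

lemma leftContInv_lt_iff_lt_cdf (hcont : Continuous (cdf ν)) {β z : ℝ} (hβ₀ : 0 < β)
    (hβ₁ : β < 1) (hz : cdf ν z ≠ β) : leftContInv (cdf ν) β < z ↔ β < cdf ν z :=
  ⟨fun h => (le_cdf_of_leftContInv_lt hβ₀ hβ₁ h).lt_of_ne hz.symm,
    leftContInv_lt_of_lt_cdf hcont hβ₀⟩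

lemma measure_Icc_eq_zero_of_cdf_eq [IsProbabilityMeasure ν] (hcont : Continuous (cdf ν))
    {a b : ℝ} (h : cdf ν a = cdf ν b) : ν (Icc a b) = 0 := by
  rw [← measure_cdf ν, StieltjesFunction.measure_Icc,
    hcont.continuousAt.continuousWithinAt.leftLim_eq, h, sub_self, ENNReal.ofReal_zero]

-- A continuous CDF is flat only on a closed interval, which carries no mass.
lemma measure_cdf_eq_eq_zero [IsProbabilityMeasure ν] (hcont : Continuous (cdf ν)) {β : ℝ}
    (hβ₀ : 0 < β) (hβ₁ : β < 1) : ν {z | cdf ν z = β} = 0 := by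
  set A := {z | cdf ν z = β}
  rcases A.eq_empty_or_nonempty with hA | hA
  · rw [hA, measure_empty]
  have hclosed : IsClosed A := isClosed_eq hcont continuous_const
  have hbdd : BddBelow A := (bddBelow_setOf_le_cdf hβ₀).mono fun z hz => hz.ge
  have hbdd' : BddAbove A := (bddAbove_setOf_cdf_le hβ₁).mono fun z hz => hz.le
  have hflat : cdf ν (sInf A) = cdf ν (sSup A) :=
    (hclosed.csInf_mem hA hbdd).trans (hclosed.csSup_mem hA hbdd').symm
  have hsub : A ⊆ Icc (sInf A) (sSup A) := fun z hz => ⟨csInf_le hbdd hz, le_csSup hbdd' hz⟩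
  exact measure_mono_null hsub (measure_Icc_eq_zero_of_cdf_eq hcont hflat)

end ContinuousCDF

lemma integral_Ioo_setIntegral_lt_eq_integral_mul {Ω : Type*} [MeasurableSpace Ω]
    {μ : Measure Ω} [SFinite μ] {Z G : Ω → ℝ} (hZ : Integrable Z μ) (hG : Measurable G)
    (hG₀ : ∀ ω, 0 ≤ G ω) (hG₁ : ∀ ω, G ω ≤ 1) :
    ∫ β in Ioo (0 : ℝ) 1, ∫ ω in {ω | β < G ω}, Z ω ∂μ
      = ∫ ω, Z ω * G ω ∂μ := by
  have hint : Integrable (Function.uncurry fun β ω => {ω | β < G ω}.indicator Z ω)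
      ((volume.restrict (Ioo (0 : ℝ) 1)).prod μ) :=
    (hZ.comp_snd _).indicator (measurableSet_lt measurable_fst (hG.comp measurable_snd))
  calc ∫ β in Ioo (0 : ℝ) 1, ∫ ω in {ω | β < G ω}, Z ω ∂μ
      = ∫ β in Ioo (0 : ℝ) 1, ∫ ω, {ω | β < G ω}.indicator Z ω ∂μ := by
        congr 1 with β
        rw [integral_indicator (measurableSet_lt measurable_const hG)]
    _ = ∫ ω, (∫ β in Ioo (0 : ℝ) 1, {ω | β < G ω}.indicator Z ω) ∂μ :=
        integral_integral_swap hint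
    _ = ∫ ω, Z ω * G ω ∂μ := by
        congr 1 with ω
        have hslice :
            (fun β => {ω | β < G ω}.indicator Z ω) = (Iio (G ω)).indicator fun _ => Z ω := by
          ext β
          simp only [indicator, mem_ofPred_eq, mem_Iio]
        rw [hslice, integral_indicator_const _ measurableSet_Iio,
          measureReal_restrict_apply measurableSet_Iio, Iio_inter_Ioo, Real.volume_real_Ioo,
          min_eq_left (hG₁ ω), sub_zero, max_eq_left (hG₀ ω), smul_eq_mul,
          mul_comm]

lemma setIntegral_Ioo_zero_one_comp_one_sub (f : ℝ → ℝ) :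
    ∫ α in Ioo (0 : ℝ) 1, f (1 - α) = ∫ α in Ioo (0 : ℝ) 1, f α := by
  rw [← integral_Ioc_eq_integral_Ioo, ← integral_Ioc_eq_integral_Ioo,
    ← intervalIntegral.integral_of_le zero_le_one,
    ← intervalIntegral.integral_of_le zero_le_one]
  simp [intervalIntegral.integral_comp_sub_left]

lemma setIntegral_leftContInv_lt_eq_of_condExp_ae_eq {Ω : Type*} [MeasurableSpace Ω]
    {P : Measure Ω} [IsProbabilityMeasure P] {Y Z : Ω → ℝ} (hZ : Measurable Z)
    (hY : Integrable Y P) (hcont : Continuous (cdf (P.map Z)))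
    (hcal : P[Y | MeasurableSpace.comap Z Real.measurableSpace] =ᵐ[P] Z)
    {β : ℝ} (hβ₀ : 0 < β) (hβ₁ : β < 1) :
    ∫ ω in {ω | leftContInv (cdf (P.map Z)) β < Z ω}, Y ω ∂P
      = ∫ ω in {ω | β < cdf (P.map Z) (Z ω)}, Z ω ∂P := by
  have := Measure.isProbabilityMeasure_map (μ := P) hZ.aemeasurable
  have hlevel : ∀ᵐ ω ∂P, cdf (P.map Z) (Z ω) ≠ β :=
    ae_of_ae_map hZ.aemeasurable
      (measure_eq_zero_iff_ae_notMem.1 (measure_cdf_eq_eq_zero hcont hβ₀ hβ₁))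
  have hsets :
      {ω | leftContInv (cdf (P.map Z)) β < Z ω} =ᵐ[P] {ω | β < cdf (P.map Z) (Z ω)} := by
    filter_upwards [hlevel] with ω hω
    exact propext (leftContInv_lt_iff_lt_cdf hcont hβ₀ hβ₁ hω)
  calc ∫ ω in {ω | leftContInv (cdf (P.map Z)) β < Z ω}, Y ω ∂P
      = ∫ ω in {ω | leftContInv (cdf (P.map Z)) β < Z ω},
          (P[Y | MeasurableSpace.comap Z Real.measurableSpace]) ω ∂P :=
        (setIntegral_condExp hZ.comap_le hY ⟨Ioi _, measurableSet_Ioi, rfl⟩).symm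
    _ = ∫ ω in {ω | leftContInv (cdf (P.map Z)) β < Z ω}, Z ω ∂P :=
        integral_congr_ae (ae_restrict_of_ae hcal)
    _ = ∫ ω in {ω | β < cdf (P.map Z) (Z ω)}, Z ω ∂P := setIntegral_congr_set hsets

end ProbabilityTheory

theorem area_under_CAP_of_autocalibrated_general
    {Ω E : Type*} [MeasureSpace Ω] [IsProbabilityMeasure (ℙ : Measure Ω)]
    [MeasurableSpace E]
    (Y : Ω → ℝ) (X : Ω → E) (μhat : E → ℝ)
    (hX : Measurable X) (hμ : Measurable μhat)
    (hYint : Integrable Y ℙ)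
    (hZint : Integrable (fun ω => μhat (X ω)) ℙ)
    (hcont : Continuous (cdfOf (Measure.map (fun ω => μhat (X ω)) ℙ)))
    (hac : ℙ[Y | MeasurableSpace.comap (fun ω => μhat (X ω)) Real.measurableSpace]
            =ᵐ[ℙ] fun ω => μhat (X ω)) :
    (∫ α in Set.Ioo (0 : ℝ) 1,
        (∫ ω in {ω | leftContInv (cdfOf (Measure.map (fun ω => μhat (X ω)) ℙ)) (1 - α)
                      < μhat (X ω)}, Y ω ∂ℙ) / (∫ ω, Y ω ∂ℙ)) - 1 / 2
      = (∫ ω, μhat (X ω) * cdfOf (Measure.map (fun ω => μhat (X ω)) ℙ) (μhat (X ω)) ∂ℙ)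
          / (∫ ω, Y ω ∂ℙ) - 1 / 2 := by
  set Z : Ω → ℝ := fun ω => μhat (X ω)
  have hZ : Measurable Z := hμ.comp hX
  have := Measure.isProbabilityMeasure_map (μ := ℙ) hZ.aemeasurable
  set F := cdf (Measure.map Z ℙ)
  rw [cdfOf_eq_cdf] at hcont ⊢
  rw [integral_div]
  congr 2
  calc ∫ α in Ioo (0 : ℝ) 1, ∫ ω in {ω | leftContInv F (1 - α) < Z ω}, Y ω
      = ∫ α in Ioo (0 : ℝ) 1, ∫ ω in {ω | 1 - α < F (Z ω)}, Z ω :=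
        setIntegral_congr_fun measurableSet_Ioo fun α hα =>
          setIntegral_leftContInv_lt_eq_of_condExp_ae_eq hZ hYint hcont hac
            (by linarith [hα.2]) (by linarith [hα.1])
    _ = ∫ β in Ioo (0 : ℝ) 1, ∫ ω in {ω | β < F (Z ω)}, Z ω :=
        setIntegral_Ioo_zero_one_comp_one_sub fun β => ∫ ω in {ω | β < F (Z ω)}, Z ω
    _ = ∫ ω, Z ω * F (Z ω) :=
        integral_Ioo_setIntegral_lt_eq_integral_mul hZint (hcont.measurable.comp hZ)
          (fun _ => cdf_nonneg _ _) (fun _ => cdf_le_one _ _)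

/-- **Area under the CAP curve of an auto-calibrated model.**
Let `(Y, X)` be a random pair with `Y` non-negative, `0 < E[Y] < ∞`, and let `μ̂` be a
regression function with `μ̂(X)` non-negative, integrable, with continuous CDF
`F_{μ̂(X)}`, auto-calibrated for `Y` (i.e. `E[Y | μ̂(X)] = μ̂(X)` a.s.). Then
`∫_0^1 CAP_{Y,μ̂(X)}(α) dα − 1/2 = (1/E[Y]) E[μ̂(X) · F_{μ̂(X)}(μ̂(X))] − 1/2`,
where `CAP_{Y,μ̂(X)}(α) = (1/E[Y]) E[Y · 1{μ̂(X) > F_{μ̂(X)}⁻¹(1−α)}]`. -/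
theorem area_under_CAP_of_autocalibrated
    {Ω E : Type*} [MeasureSpace Ω] [IsProbabilityMeasure (ℙ : Measure Ω)]
    [MeasurableSpace E]
    (Y : Ω → ℝ) (X : Ω → E) (μhat : E → ℝ)
    (hX : Measurable X) (hμ : Measurable μhat)
    (hYnn : ∀ ω, 0 ≤ Y ω) (hYint : Integrable Y ℙ) (hEY : 0 < ∫ ω, Y ω ∂ℙ)
    (hZnn : ∀ ω, 0 ≤ μhat (X ω))
    (hZint : Integrable (fun ω => μhat (X ω)) ℙ)
    (hcont : Continuous (cdfOf (Measure.map (fun ω => μhat (X ω)) ℙ)))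
    (hac : ℙ[Y | MeasurableSpace.comap (fun ω => μhat (X ω)) Real.measurableSpace]
            =ᵐ[ℙ] fun ω => μhat (X ω)) :
    (∫ α in Set.Ioo (0 : ℝ) 1,
        (∫ ω in {ω | leftContInv (cdfOf (Measure.map (fun ω => μhat (X ω)) ℙ)) (1 - α)
                      < μhat (X ω)}, Y ω ∂ℙ) / (∫ ω, Y ω ∂ℙ)) - 1 / 2
      = (∫ ω, μhat (X ω) * cdfOf (Measure.map (fun ω => μhat (X ω)) ℙ) (μhat (X ω)) ∂ℙ)
          / (∫ ω, Y ω ∂ℙ) - 1 / 2 :=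
  area_under_CAP_of_autocalibrated_general Y X μhat hX hμ hYint hZint hcont hac
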